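/- Let l_n denote the number of independent dominating sets of the para-chain hexagonal cactus L_n, and set l_0 = 1 (the one-vertex graph L_0 has exactly one maximal independent set). Then l_1 = 5, l_2 = 19, l_3 = 76, and for every n ≥ 3, l_n = 5l_{n-1} − 4l_{n-2} + l_{n-3}. -/

import Mathlib

/-- `S` is an independent dominating set of `G`: pairwise non-adjacent, and every
vertex outside `S` has a neighbour in `S`. -/
def IsIndepDomSet {V : Type*} (G : SimpleGraph V) (S : Finset V) : Prop :=
  (∀ v ∈ S, ∀ w ∈ S, ¬ G.Adj v w) ∧ ∀ v, v ∉ S → ∃ w ∈ S, G.Adj v w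

/-- The para-chain hexagonal cactus `L n`: `Sum.inl i` is the cut vertex `x i`
(`0 ≤ i ≤ n`) and `Sum.inr (k, t)` for `t = 0, 1, 2, 3` is `a (k+1)`, `b (k+1)`,
`c (k+1)`, `d (k+1)` respectively (`0 ≤ k ≤ n-1`); the `i`-th hexagon
(`1 ≤ i ≤ n`) is the six-cycle `x (i-1) – a i – b i – x i – c i – d i – x (i-1)`. -/
def paraHex (n : ℕ) : SimpleGraph (Fin (n + 1) ⊕ Fin n × Fin 4) :=
  SimpleGraph.fromRel fun p q =>
    match p, q with
    | Sum.inl i, Sum.inr (k, t) =>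
        ((i : ℕ) = (k : ℕ) ∧ (t = 0 ∨ t = 3)) ∨
          ((i : ℕ) = (k : ℕ) + 1 ∧ (t = 1 ∨ t = 2))
    | Sum.inr (k, t), Sum.inr (k', t') =>
        k = k' ∧ ((t = 0 ∧ t' = 1) ∨ (t = 2 ∧ t' = 3))
    | _, _ => False

/-- The number of independent dominating sets of the para-chain hexagonal cactus `L n`. -/
noncomputable def numIDSParaHex (n : ℕ) : ℕ :=
  Nat.card {S : Finset (Fin (n + 1) ⊕ Fin n × Fin 4) // IsIndepDomSet (paraHex n) S}

/-!
Read the hexagons from left to right. Once we record, for each cut vertex `x_i`, whether it lies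
in `S`, is dominated by `b_i` or `c_i`, or neither (and so must be dominated by `a_{i+1}` or
`d_{i+1}`), the condition "`S` is a maximal independent set" becomes a condition on each hexagon
separately. Hence the independent dominating sets of `L_n` are in bijection with the walks of
length `n` in a digraph on these three states that do not end undominated (`x_0` is never
dominated from the left), an edge being a valid filling of one hexagon. The matrix of edge
multiplicities is `M = !![1, 1, 0; 1, 3, 1; 1, 2, 1]`, so `l_n` is a sum of four entries of
`M ^ n`, and Cayley–Hamilton, `M ^ 3 = 5 M ^ 2 - 4 M + 1`, gives the recurrence.
-/

open Finset

section LabelledWalk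

variable {α β : Type*} (R : α → β → α → Prop)

def IsLabelledWalk {n : ℕ} (s : Fin (n + 1) → α) (f : Fin n → β) : Prop :=
  ∀ k : Fin n, R (s k.castSucc) (f k) (s k.succ)

noncomputable def transferMatrix : Matrix α α ℕ := fun a b => Nat.card {t // R a t b}

abbrev LabelledWalk (n : ℕ) (a b : α) :=
  {p : (Fin (n + 1) → α) × (Fin n → β) //
    IsLabelledWalk R p.1 p.2 ∧ p.1 0 = a ∧ p.1 (Fin.last n) = b}

variable {R}

theorem isLabelledWalk_succ_iff {n : ℕ} {s : Fin (n + 2) → α} {f : Fin (n + 1) → β} :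
    IsLabelledWalk R s f ↔
      R (s 0) (f 0) (Fin.tail s 0) ∧ IsLabelledWalk R (Fin.tail s) (Fin.tail f) := by
  simp only [IsLabelledWalk, Fin.forall_fin_succ, Fin.tail, Fin.succ_castSucc]
  rfl

def labelledWalkConsEquiv (n : ℕ) (a b : α) :
    LabelledWalk R (n + 1) a b ≃ Σ c, {t // R a t c} × LabelledWalk R n c b where
  toFun p :=
    ⟨Fin.tail p.1.1 0,
      ⟨p.1.2 0, by obtain ⟨⟨s, f⟩, hw, rfl, -⟩ := p; exact (isLabelledWalk_succ_iff.1 hw).1⟩,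
      ⟨(Fin.tail p.1.1, Fin.tail p.1.2), (isLabelledWalk_succ_iff.1 p.2.1).2, rfl, p.2.2.2⟩⟩
  invFun x := ⟨(Fin.cons a x.2.2.1.1, Fin.cons x.2.1.1 x.2.2.1.2), by
    obtain ⟨c, ⟨t, ht⟩, ⟨⟨s, f⟩, hw, rfl, rfl⟩⟩ := x
    simpa [isLabelledWalk_succ_iff, ← Fin.succ_last] using ⟨ht, hw⟩⟩
  left_inv := by
    rintro ⟨⟨s, f⟩, hw, rfl, hl⟩
    simp
  right_inv := by
    rintro ⟨c, ⟨t, ht⟩, ⟨⟨s, f⟩, hw, rfl, rfl⟩⟩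
    rfl

variable [Fintype α] [DecidableEq α] [Finite β]

theorem card_labelledWalk (n : ℕ) (a b : α) :
    Nat.card (LabelledWalk R n a b) = (transferMatrix R ^ n) a b := by
  induction n generalizing a with
  | zero =>
    rw [pow_zero, Matrix.one_apply]
    split_ifs with hab
    · subst hab
      refine Nat.card_eq_one_iff_exists.2
        ⟨⟨(fun _ => a, Fin.elim0), fun k => k.elim0, rfl, rfl⟩, ?_⟩
      rintro ⟨⟨s, f⟩, -, rfl, -⟩
      ext i
      · simp [Fin.fin_one_eq_zero i]
      · exact i.elim0
    · have : IsEmpty (LabelledWalk R 0 a b) :=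
        ⟨fun ⟨_, _, h0, hl⟩ => hab (h0.symm.trans hl)⟩
      exact Nat.card_of_isEmpty
  | succ n ih =>
    rw [Nat.card_congr (labelledWalkConsEquiv n a b), Nat.card_sigma, pow_succ',
      Matrix.mul_apply]
    simp only [Nat.card_prod, ih, transferMatrix]

theorem card_labelledWalk_ends (P Q : α → Prop) [DecidablePred P] [DecidablePred Q] (n : ℕ) :
    Nat.card {p : (Fin (n + 1) → α) × (Fin n → β) //
        IsLabelledWalk R p.1 p.2 ∧ P (p.1 0) ∧ Q (p.1 (Fin.last n))} =
      ∑ a ∈ univ.filter P, ∑ b ∈ univ.filter Q, (transferMatrix R ^ n) a b := by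
  let e : {p : (Fin (n + 1) → α) × (Fin n → β) //
        IsLabelledWalk R p.1 p.2 ∧ P (p.1 0) ∧ Q (p.1 (Fin.last n))} ≃
      Σ a : {a // P a}, Σ b : {b // Q b}, LabelledWalk R n a b :=
    { toFun p := ⟨⟨_, p.2.2.1⟩, ⟨_, p.2.2.2⟩, ⟨p.1, p.2.1, rfl, rfl⟩⟩
      invFun x := ⟨x.2.2.1, x.2.2.2.1, by rw [x.2.2.2.2.1]; exact x.1.2,
        by rw [x.2.2.2.2.2]; exact x.2.1.2⟩
      left_inv _ := rfl
      right_inv := by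
        rintro ⟨⟨a, ha⟩, ⟨b, hb⟩, ⟨p, hp⟩⟩
        obtain ⟨-, h0, hl⟩ := id hp
        subst h0 hl
        rfl }
  simp only [Nat.card_congr e, Nat.card_sigma, card_labelledWalk]
  rw [Finset.sum_subtype (univ.filter P) (fun _ => mem_filter_univ _)]
  refine Fintype.sum_congr _ _ fun a => ?_
  rw [Finset.sum_subtype (univ.filter Q) (fun _ => mem_filter_univ _)]

end LabelledWalk

theorem isIndepDomSet_iff_forall_mem_iff {V : Type*} (G : SimpleGraph V) (S : Finset V) :
    IsIndepDomSet G S ↔ ∀ v, v ∈ S ↔ ∀ w, G.Adj v w → w ∉ S := by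
  refine ⟨fun ⟨hind, hdom⟩ v => ⟨fun hv w hvw hw => hind v hv w hw hvw, fun h => ?_⟩,
    fun h => ⟨fun v hv w hw hvw => (h v).1 hv w hvw hw, fun v hv => ?_⟩⟩
  · by_contra hv
    obtain ⟨w, hw, hvw⟩ := hdom v hv
    exact h w hvw hw
  · by_contra! hdom
    exact hv ((h v).2 fun w hvw hw => hdom w hw hvw)

namespace paraHex

/-- Maximality (`v ∈ S` iff no neighbour of `v` is in `S`) at the inner vertices `a, b, c, d`
(indices `0, 1, 2, 3`) of a hexagon, given the memberships `p`, `q` of its left and right cut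
vertices. -/
def HexagonRule (p q : Prop) (T : Finset (Fin 4)) : Prop :=
  (0 ∈ T ↔ ¬p ∧ 1 ∉ T) ∧ (1 ∈ T ↔ ¬q ∧ 0 ∉ T) ∧ (2 ∈ T ↔ ¬q ∧ 3 ∉ T) ∧ (3 ∈ T ↔ ¬p ∧ 2 ∉ T)

/-- The state of a cut vertex is `0` if it is in `S`, `1` if it is not but is dominated by the
hexagon on its left, and `2` otherwise, in which case the hexagon on its right must dominate it. -/
def hexTransition (σ : Fin 3) (T : Finset (Fin 4)) (σ' : Fin 3) : Prop :=
  HexagonRule (σ = 0) (σ' = 0) T ∧ (σ = 2 → 0 ∈ T ∨ 3 ∈ T) ∧ (σ' = 1 ↔ 1 ∈ T ∨ 2 ∈ T)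

instance (σ σ' : Fin 3) : DecidablePred (hexTransition σ · σ') := fun T => by
  unfold hexTransition HexagonRule; infer_instance

theorem transferMatrix_hexTransition :
    transferMatrix hexTransition = !![1, 1, 0; 1, 3, 1; 1, 2, 1] := by
  ext σ σ'
  rw [transferMatrix, Nat.card_eq_fintype_card]
  fin_cases σ <;> fin_cases σ' <;> decide

theorem transferMatrix_hexTransition_pow_three :
    transferMatrix hexTransition ^ 3 + 4 • transferMatrix hexTransition =
      5 • transferMatrix hexTransition ^ 2 + 1 := by
  rw [transferMatrix_hexTransition]
  decide

variable {n : ℕ}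

theorem not_adj_inl_inl (i j : Fin (n + 1)) : ¬ (paraHex n).Adj (.inl i) (.inl j) := by
  simp [paraHex]

theorem adj_inl_inr (i : Fin (n + 1)) (k : Fin n) (t : Fin 4) :
    (paraHex n).Adj (.inl i) (.inr (k, t)) ↔
      i = k.castSucc ∧ (t = 0 ∨ t = 3) ∨ i = k.succ ∧ (t = 1 ∨ t = 2) := by
  simp only [paraHex, SimpleGraph.fromRel_adj, Fin.ext_iff, Fin.val_castSucc, Fin.val_succ]
  simp

theorem adj_inr_inl (k : Fin n) (t : Fin 4) (i : Fin (n + 1)) :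
    (paraHex n).Adj (.inr (k, t)) (.inl i) ↔
      i = k.castSucc ∧ (t = 0 ∨ t = 3) ∨ i = k.succ ∧ (t = 1 ∨ t = 2) := by
  rw [SimpleGraph.adj_comm, adj_inl_inr]

theorem adj_inr_inr (k k' : Fin n) (t t' : Fin 4) :
    (paraHex n).Adj (.inr (k, t)) (.inr (k', t')) ↔
      k = k' ∧ (t = 0 ∧ t' = 1 ∨ t = 1 ∧ t' = 0 ∨ t = 2 ∧ t' = 3 ∨ t = 3 ∧ t' = 2) := by
  simp only [paraHex, SimpleGraph.fromRel_adj]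
  fin_cases t <;> fin_cases t' <;> simp [eq_comm]

variable (S : Finset (Fin (n + 1) ⊕ Fin n × Fin 4))

def hexagon (k : Fin n) : Finset (Fin 4) := univ.filter fun t => .inr (k, t) ∈ S

@[simp]
theorem mem_hexagon {k : Fin n} {t : Fin 4} : t ∈ hexagon S k ↔ .inr (k, t) ∈ S := by
  simp [hexagon]

def IsDominatedFromLeft (i : Fin (n + 1)) : Prop :=
  ∃ k : Fin n, k.succ = i ∧ (1 ∈ hexagon S k ∨ 2 ∈ hexagon S k)

def IsDominatedFromRight (i : Fin (n + 1)) : Prop :=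
  ∃ k : Fin n, k.castSucc = i ∧ (0 ∈ hexagon S k ∨ 3 ∈ hexagon S k)

theorem isDominatedFromLeft_succ (k : Fin n) :
    IsDominatedFromLeft S k.succ ↔ 1 ∈ hexagon S k ∨ 2 ∈ hexagon S k := by
  simp [IsDominatedFromLeft]

theorem isDominatedFromRight_castSucc (k : Fin n) :
    IsDominatedFromRight S k.castSucc ↔ 0 ∈ hexagon S k ∨ 3 ∈ hexagon S k := by
  simp [IsDominatedFromRight]

theorem not_isDominatedFromLeft_zero : ¬ IsDominatedFromLeft S 0 := by
  simp [IsDominatedFromLeft, Fin.succ_ne_zero]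

theorem not_isDominatedFromRight_last : ¬ IsDominatedFromRight S (Fin.last n) := by
  simp [IsDominatedFromRight, Fin.castSucc_ne_last]

theorem forall_inr_mem_iff_hexagonRule :
    (∀ k t, (.inr (k, t) ∈ S ↔ ∀ w, (paraHex n).Adj (.inr (k, t)) w → w ∉ S)) ↔
      ∀ k, HexagonRule (.inl k.castSucc ∈ S) (.inl k.succ ∈ S) (hexagon S k) := by
  refine forall_congr' fun k => ?_
  rw [Fin.forall_fin_succ, Fin.forall_fin_succ, Fin.forall_fin_succ, Fin.forall_fin_one]
  simp [HexagonRule, Sum.forall, adj_inr_inr, adj_inr_inl]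

theorem forall_adj_inl_notMem_iff (i : Fin (n + 1)) :
    (∀ w, (paraHex n).Adj (.inl i) w → w ∉ S) ↔
      ¬ IsDominatedFromLeft S i ∧ ¬ IsDominatedFromRight S i := by
  simp only [Sum.forall, not_adj_inl_inl, adj_inl_inr, Prod.forall, IsDominatedFromLeft,
    IsDominatedFromRight, mem_hexagon]
  grind

theorem not_isDominated_of_inl_mem
    (hhex : ∀ k, HexagonRule (.inl k.castSucc ∈ S) (.inl k.succ ∈ S) (hexagon S k))
    {i : Fin (n + 1)} (hi : .inl i ∈ S) :
    ¬ IsDominatedFromLeft S i ∧ ¬ IsDominatedFromRight S i := by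
  constructor <;>
  · rintro ⟨k, rfl, h⟩
    have := hhex k
    unfold HexagonRule at this
    tauto

theorem isIndepDomSet_iff_hexagonRule :
    IsIndepDomSet (paraHex n) S ↔
      (∀ k, HexagonRule (.inl k.castSucc ∈ S) (.inl k.succ ∈ S) (hexagon S k)) ∧
        ∀ i, .inl i ∉ S → IsDominatedFromLeft S i ∨ IsDominatedFromRight S i := by
  rw [isIndepDomSet_iff_forall_mem_iff, Sum.forall, Prod.forall, forall_inr_mem_iff_hexagonRule]
  simp only [forall_adj_inl_notMem_iff]
  refine and_comm.trans (and_congr_right fun hhex => forall_congr' fun i => ?_)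
  have := not_isDominated_of_inl_mem S hhex (i := i)
  tauto

open Classical in
noncomputable def cutState (i : Fin (n + 1)) : Fin 3 :=
  if .inl i ∈ S then 0 else if IsDominatedFromLeft S i then 1 else 2

section cutState

variable {S} {i : Fin (n + 1)}

theorem cutState_eq_zero : cutState S i = 0 ↔ .inl i ∈ S := by
  unfold cutState; split_ifs <;> simp_all

theorem cutState_eq_one : cutState S i = 1 ↔ .inl i ∉ S ∧ IsDominatedFromLeft S i := by
  unfold cutState; split_ifs <;> simp_all

theorem cutState_eq_two : cutState S i = 2 ↔ .inl i ∉ S ∧ ¬ IsDominatedFromLeft S i := by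
  unfold cutState; split_ifs <;> simp_all

end cutState

theorem cutState_zero_ne_one : cutState S 0 ≠ 1 :=
  fun h => not_isDominatedFromLeft_zero S (cutState_eq_one.1 h).2

theorem isIndepDomSet_iff_isLabelledWalk :
    IsIndepDomSet (paraHex n) S ↔
      IsLabelledWalk hexTransition (cutState S) (hexagon S) ∧ cutState S (Fin.last n) ≠ 2 := by
  rw [isIndepDomSet_iff_hexagonRule]
  constructor
  · rintro ⟨hhex, hdom⟩
    refine ⟨fun k => ⟨?_, fun h2 => ?_, ?_⟩, fun h2 => ?_⟩
    · simpa only [cutState_eq_zero] using hhex k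
    · rw [cutState_eq_two] at h2
      exact (isDominatedFromRight_castSucc S k).1 ((hdom _ h2.1).resolve_left h2.2)
    · have := hhex k
      unfold HexagonRule at this
      rw [cutState_eq_one, isDominatedFromLeft_succ]
      tauto
    · rw [cutState_eq_two] at h2
      exact not_isDominatedFromRight_last S ((hdom _ h2.1).resolve_left h2.2)
  · rintro ⟨hwalk, hlast⟩
    refine ⟨fun k => by simpa only [cutState_eq_zero] using (hwalk k).1, fun i hi => ?_⟩
    by_contra! h
    have h2 : cutState S i = 2 := cutState_eq_two.2 ⟨hi, h.1⟩
    obtain ⟨k, rfl⟩ : ∃ k : Fin n, k.castSucc = i :=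
      Fin.exists_castSucc_eq.2 fun hil => hlast (hil ▸ h2)
    exact h.2 ((isDominatedFromRight_castSucc S k).2 ((hwalk k).2.1 h2))

def ofWalk (s : Fin (n + 1) → Fin 3) (f : Fin n → Finset (Fin 4)) :
    Finset (Fin (n + 1) ⊕ Fin n × Fin 4) :=
  (univ.filter fun i => s i = 0).disjSum (univ.filter fun kt => kt.2 ∈ f kt.1)

theorem ofWalk_cutState_hexagon : ofWalk (cutState S) (hexagon S) = S := by
  ext (i | ⟨k, t⟩) <;> simp [ofWalk, cutState_eq_zero]

section ofWalk

variable {s : Fin (n + 1) → Fin 3} {f : Fin n → Finset (Fin 4)}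

theorem hexagon_ofWalk : hexagon (ofWalk s f) = f := by
  ext k t
  simp [ofWalk]

theorem cutState_ofWalk (hwalk : IsLabelledWalk hexTransition s f) (h0 : s 0 ≠ 1) :
    cutState (ofWalk s f) = s := by
  have fin_three_ext : ∀ x y : Fin 3, x = y ↔ (x = 0 ↔ y = 0) ∧ (x = 1 ↔ y = 1) := by decide
  funext i
  rw [fin_three_ext, cutState_eq_zero, cutState_eq_one]
  cases i using Fin.cases with
  | zero => simp [ofWalk, not_isDominatedFromLeft_zero, h0]
  | succ k =>
    rw [isDominatedFromLeft_succ, hexagon_ofWalk, ← (hwalk k).2.2]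
    simp +contextual [ofWalk]

end ofWalk

variable (n) in
noncomputable def indepDomSetEquivWalk :
    {S // IsIndepDomSet (paraHex n) S} ≃
      {p : (Fin (n + 1) → Fin 3) × (Fin n → Finset (Fin 4)) //
        IsLabelledWalk hexTransition p.1 p.2 ∧ p.1 0 ≠ 1 ∧ p.1 (Fin.last n) ≠ 2} where
  toFun S :=
    have h := (isIndepDomSet_iff_isLabelledWalk S.1).1 S.2
    ⟨(cutState S.1, hexagon S.1), h.1, cutState_zero_ne_one S.1, h.2⟩
  invFun p :=
    ⟨ofWalk p.1.1 p.1.2, by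
      rw [isIndepDomSet_iff_isLabelledWalk, cutState_ofWalk p.2.1 p.2.2.1, hexagon_ofWalk]
      exact ⟨p.2.1, p.2.2.2⟩⟩
  left_inv S := Subtype.ext (ofWalk_cutState_hexagon S.1)
  right_inv p := Subtype.ext (Prod.ext (cutState_ofWalk p.2.1 p.2.2.1) hexagon_ofWalk)

end paraHex

open paraHex

theorem numIDSParaHex_eq_sum (n : ℕ) :
    numIDSParaHex n = ∑ a ∈ {0, 2}, ∑ b ∈ {0, 1}, (transferMatrix hexTransition ^ n) a b := by
  rw [numIDSParaHex, Nat.card_congr (indepDomSetEquivWalk n),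
    card_labelledWalk_ends (fun a => a ≠ 1) (fun b => b ≠ 2)]
  rfl

theorem numIDSParaHex_add_three (m : ℕ) :
    numIDSParaHex (m + 3) + 4 * numIDSParaHex (m + 1) =
      5 * numIDSParaHex (m + 2) + numIDSParaHex m := by
  set M := transferMatrix hexTransition
  have h : M ^ (m + 3) + 4 • M ^ (m + 1) = 5 • M ^ (m + 2) + M ^ m :=
    calc M ^ (m + 3) + 4 • M ^ (m + 1) = M ^ m * (M ^ 3 + 4 • M) := by
          rw [mul_add, mul_smul_comm, ← pow_add, ← pow_succ]
      _ = M ^ m * (5 • M ^ 2 + 1) := by rw [transferMatrix_hexTransition_pow_three]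
      _ = 5 • M ^ (m + 2) + M ^ m := by rw [mul_add, mul_smul_comm, ← pow_add, mul_one]
  have := congrArg (fun A : Matrix (Fin 3) (Fin 3) ℕ => ∑ a ∈ {0, 2}, ∑ b ∈ {0, 1}, A a b) h
  simpa only [numIDSParaHex_eq_sum, Matrix.add_apply, Matrix.smul_apply, smul_eq_mul,
    sum_add_distrib, ← mul_sum] using this

/-- `l 0 = 1`, `l 1 = 5`, `l 2 = 19`, `l 3 = 76`, and
`l n = 5·l (n-1) - 4·l (n-2) + l (n-3)` for `n ≥ 3`, where `l n` is the number of
independent dominating sets of `L n` (`L 0` being the one-vertex graph). -/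
theorem numIDSParaHex_recurrence :
    numIDSParaHex 0 = 1 ∧ numIDSParaHex 1 = 5 ∧ numIDSParaHex 2 = 19 ∧
      numIDSParaHex 3 = 76 ∧
      ∀ n : ℕ, 3 ≤ n →
        (numIDSParaHex n : ℤ) =
          5 * numIDSParaHex (n - 1) - 4 * numIDSParaHex (n - 2) + numIDSParaHex (n - 3) := by
  refine ⟨?_, ?_, ?_, ?_, fun n hn => ?recurrence⟩
  case recurrence =>
    obtain ⟨m, rfl⟩ := Nat.exists_eq_add_of_le' hn
    have := numIDSParaHex_add_three m
    simp only [Nat.add_sub_cancel, Nat.reduceSubDiff]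
    omega
  all_goals rw [numIDSParaHex_eq_sum, transferMatrix_hexTransition]; decide
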